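/- arXiv:2509.11859 — 4 statements merged into one kernel-verified Lean document; each statement's English description precedes it below -/
import Mathlib

section
/- Let F : ℝ → [0,1] be a nondecreasing function, t ∈ (0,1), and q = Quant_t(F). Assume that F exceeds the level t immediately to the right of q, i.e. F(q + ε) > t for every ε > 0. Then for every ε > 0 there exists Δ > 0 such that every nondecreasing G : ℝ → [0,1] with sup_{x∈ℝ} |G(x) − F(x)| ≤ Δ satisfies q − ε ≤ Quant_t(G) ≤ q + ε. In particular, quantile estimation from any uniform confidence band on the cdf yields effective (two-sided, convergent) bounds under this condition, which holds whenever F is continuous and strictly increasing at q. -/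
/-- Let `F : ℝ → [0,1]` be nondecreasing, `t ∈ (0,1)`, and let
`q = Quant_t(F)` (i.e. `q` is the greatest lower bound of `{v | F v ≥ t}`). Assume `F`
exceeds the level `t` immediately to the right of `q`, i.e. `F (q + ε) > t` for every
`ε > 0`. Then for every `ε > 0` there is a `Δ > 0` such that every nondecreasing
`G : ℝ → [0,1]` with `sup_x |G x - F x| ≤ Δ` satisfies
`q - ε ≤ Quant_t(G) ≤ q + ε`. -/
theorem quantile_effective_bounds_of_right_crossing
    (F : ℝ → ℝ) (hF : Monotone F) (hF01 : ∀ x, F x ∈ Set.Icc (0 : ℝ) 1)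
    (t : ℝ) (ht : t ∈ Set.Ioo (0 : ℝ) 1)
    (q : ℝ) (hq : IsGLB {v : ℝ | t ≤ F v} q)
    (hright : ∀ ε > (0 : ℝ), t < F (q + ε)) :
    ∀ ε > (0 : ℝ), ∃ Δ > (0 : ℝ), ∀ G : ℝ → ℝ,
      Monotone G → (∀ x, G x ∈ Set.Icc (0 : ℝ) 1) → (∀ x, |G x - F x| ≤ Δ) →
      q - ε ≤ sInf {v : ℝ | t ≤ G v} ∧ sInf {v : ℝ | t ≤ G v} ≤ q + ε := by
  intro ε hε
  have hFqe : F (q - ε) < t := by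
    by_contra h
    push_neg at h
    have : q ≤ q - ε := hq.1 h
    linarith
  have h1 : (0 : ℝ) < F (q + ε) - t := by
    have := hright ε hε; linarith
  have h2 : (0 : ℝ) < t - F (q - ε) := by linarith
  refine ⟨min ((F (q + ε) - t) / 2) ((t - F (q - ε)) / 2), by positivity, ?_⟩
  intro G hG hG01 hGF
  have hΔ1 : min ((F (q + ε) - t) / 2) ((t - F (q - ε)) / 2) ≤ (F (q + ε) - t) / 2 :=
    min_le_left _ _
  have hΔ2 : min ((F (q + ε) - t) / 2) ((t - F (q - ε)) / 2) ≤ (t - F (q - ε)) / 2 :=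
    min_le_right _ _
  -- q + ε is in the set
  have hmem : q + ε ∈ {v : ℝ | t ≤ G v} := by
    have h := hGF (q + ε)
    have := abs_le.1 h
    simp only [Set.mem_setOf_eq]
    linarith [this.2]
  -- q - ε is a lower bound
  have hlb : ∀ v ∈ {v : ℝ | t ≤ G v}, q - ε ≤ v := by
    intro v hv
    by_contra h
    push_neg at h
    have hFv : F v ≤ F (q - ε) := hF h.le
    have h := hGF v
    have := abs_le.1 h
    simp only [Set.mem_setOf_eq] at hv
    linarith [this.1]
  have hbdd : BddBelow {v : ℝ | t ≤ G v} := ⟨q - ε, hlb⟩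
  constructor
  · exact le_csInf ⟨_, hmem⟩ hlb
  · exact csInf_le hbdd hmem
end

section
/- Equivalence of the two definitions of conditional value-at-risk: let X be a nonnegative integrable real-valued random variable, t ∈ (0,1), and v = Quant_t(X) = inf{u ∈ ℝ : P(X ≤ u) ≥ t}. Then ∫_0^t Quant_s(X) ds = E[X · 1_{X < v}] + (t − P(X < v)) · v; equivalently, CVaR_t(X) = (1/t)∫_0^t Quant_s(X) ds = (1/t)(P(X < v) · E[X | X < v] + (t − P(X < v)) · v). -/
/-!
The quantile function `Q` is the lower Galois adjoint of the cdf `F` on `(0,1)`: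
`Q s ≤ y ↔ s ≤ F y`. Hence `Q` pushes Lebesgue measure on `(0,1)` forward to the law of `X`.
With `v = Q t`, the part of `(0,t]` where `Q < v` is exactly `Q⁻¹(-∞,v) ∩ (0,1)`; there the
integral of `Q` transports to `E[X · 1_{X < v}]` and its length to `P(X < v)`. On the rest of
`(0,t]` the monotone function `Q` equals `v`, which gives the term `(t - P(X < v)) · v`.
-/

open MeasureTheory Set Filter ProbabilityTheory

namespace ProbabilityTheory

/-- Only meaningful for `s ∈ (0,1)`: outside, the `sInf` of an empty or unbounded set is junk. -/
noncomputable def quantile (ν : Measure ℝ) (s : ℝ) : ℝ := sInf {u | s ≤ cdf ν u}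

variable (ν : Measure ℝ) {s : ℝ}

lemma bddBelow_setOf_le_cdf (hs : 0 < s) : BddBelow {u | s ≤ cdf ν u} := by
  obtain ⟨a, ha⟩ :=
    eventually_atBot.1 ((tendsto_cdf_atBot ν).eventually (eventually_lt_nhds hs))
  exact ⟨a, fun u hu => le_of_not_gt fun hua => (ha u hua.le).not_ge hu⟩

lemma nonempty_setOf_le_cdf (hs : s < 1) : {u | s ≤ cdf ν u}.Nonempty :=
  ((tendsto_cdf_atTop ν).eventually (eventually_gt_nhds hs)).exists.imp fun _ hu => hu.le

lemma le_cdf_quantile (hs : s ∈ Ioo 0 1) : s ≤ cdf ν (quantile ν s) := by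
  refine ge_of_tendsto (((cdf ν).right_continuous _).mono Ioi_subset_Ici_self).tendsto
    (eventually_nhdsWithin_of_forall fun u hu => ?_)
  obtain ⟨w, hw, hwu⟩ := exists_lt_of_csInf_lt (nonempty_setOf_le_cdf ν hs.2) hu
  exact hw.trans (monotone_cdf ν hwu.le)

lemma quantile_le_iff (hs : s ∈ Ioo 0 1) (y : ℝ) : quantile ν s ≤ y ↔ s ≤ cdf ν y :=
  ⟨fun h => (le_cdf_quantile ν hs).trans (monotone_cdf ν h),
    fun h => csInf_le (bddBelow_setOf_le_cdf ν hs.1) h⟩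

lemma monotoneOn_quantile : MonotoneOn (quantile ν) (Ioo 0 1) := fun _ ha _ hb hab =>
  (quantile_le_iff ν ha _).2 (hab.trans (le_cdf_quantile ν hb))

lemma aemeasurable_quantile : AEMeasurable (quantile ν) (volume.restrict (Ioo 0 1)) :=
  aemeasurable_restrict_of_monotoneOn measurableSet_Ioo (monotoneOn_quantile ν)

lemma volume_restrict_Ioo_zero_one_Iic {c : ℝ} (hc : c ≤ 1) :
    volume.restrict (Ioo (0 : ℝ) 1) (Iic c) = ENNReal.ofReal c := by
  rw [Measure.restrict_congr_set Ioo_ae_eq_Ioc, Measure.restrict_apply measurableSet_Iic,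
    Iic_inter_Ioc_of_le hc, Real.volume_Ioc, sub_zero]

theorem map_quantile_volume_restrict_Ioo [IsProbabilityMeasure ν] :
    (volume.restrict (Ioo 0 1)).map (quantile ν) = ν := by
  refine Measure.ext_of_Iic _ _ fun y => ?_
  have hpre : quantile ν ⁻¹' Iic y ∩ Ioo 0 1 = Iic (cdf ν y) ∩ Ioo 0 1 := by
    ext s
    exact and_congr_left (quantile_le_iff ν · y)
  rw [Measure.map_apply_of_aemeasurable (aemeasurable_quantile ν) measurableSet_Iic,
    Measure.restrict_apply' measurableSet_Ioo, hpre, ← Measure.restrict_apply' measurableSet_Ioo,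
    volume_restrict_Ioo_zero_one_Iic (cdf_le_one ν y), ofReal_cdf]

variable [IsProbabilityMeasure ν]

lemma volume_preimage_quantile_inter_Ioo {B : Set ℝ} (hB : MeasurableSet B) :
    volume (quantile ν ⁻¹' B ∩ Ioo 0 1) = ν B := by
  rw [← Measure.restrict_apply' measurableSet_Ioo,
    ← Measure.map_apply_of_aemeasurable (aemeasurable_quantile ν) hB,
    map_quantile_volume_restrict_Ioo]

lemma setIntegral_preimage_quantile_inter_Ioo {E : Type*} [NormedAddCommGroup E]
    [NormedSpace ℝ E] {B : Set ℝ} (hB : MeasurableSet B) {f : ℝ → E}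
    (hf : AEStronglyMeasurable f ν) :
    ∫ s in quantile ν ⁻¹' B ∩ Ioo 0 1, f (quantile ν s) = ∫ x in B, f x ∂ν := by
  have hmap := map_quantile_volume_restrict_Ioo ν
  rw [← Measure.restrict_restrict' measurableSet_Ioo, ← setIntegral_map hB (by rwa [hmap])
    (aemeasurable_quantile ν), hmap]

lemma integrableOn_quantile (h : Integrable id ν) : IntegrableOn (quantile ν) (Ioo 0 1) :=
  (integrable_map_measure aestronglyMeasurable_id (aemeasurable_quantile ν)).1
    ((map_quantile_volume_restrict_Ioo ν).symm ▸ h)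

theorem intervalIntegral_quantile_eq_setIntegral_Iio_add (h : Integrable id ν) {t : ℝ}
    (ht : t ∈ Ioo 0 1) :
    ∫ s in 0..t, quantile ν s = (∫ x in Iio (quantile ν t), x ∂ν)
      + (t - ν.real (Iio (quantile ν t))) * quantile ν t := by
  set v := quantile ν t
  let A := quantile ν ⁻¹' Iio v ∩ Ioo 0 1
  have hAt : A ⊆ Ioc 0 t := fun s ⟨hsv, hs⟩ =>
    ⟨hs.1, le_of_not_gt fun hts => (monotoneOn_quantile ν ht hs hts.le).not_gt hsv⟩
  have hA : MeasurableSet A := OrdConnected.measurableSet ⟨fun a ha b hb c hc =>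
    have hc' : c ∈ Ioo 0 1 := ⟨ha.2.1.trans_le hc.1, hc.2.trans_lt hb.2.2⟩
    ⟨(monotoneOn_quantile ν hc' hb.2 hc.2).trans_lt hb.1, hc'⟩⟩
  have hQv : ∀ s ∈ Ioc 0 t \ A, quantile ν s = v := fun s ⟨hs, hsA⟩ =>
    have hs' : s ∈ Ioo 0 1 := ⟨hs.1, hs.2.trans_lt ht.2⟩
    le_antisymm (monotoneOn_quantile ν hs' ht hs.2) (not_lt.1 fun hsv => hsA ⟨hsv, hs'⟩)
  have hint : IntegrableOn (quantile ν) (Ioc 0 t) :=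
    (integrableOn_quantile ν h).mono_set (Ioc_subset_Ioo_right ht.2)
  calc ∫ s in 0..t, quantile ν s
      = (∫ s in A, quantile ν s) + ∫ s in Ioc 0 t \ A, quantile ν s := by
        rw [intervalIntegral.integral_of_le ht.1.le, ← integral_inter_add_sdiff hA hint,
          inter_eq_right.2 hAt]
    _ = (∫ x in Iio v, x ∂ν) + (t - ν.real (Iio v)) * v := by
        rw [setIntegral_preimage_quantile_inter_Ioo ν measurableSet_Iio (f := fun x => x)
          aestronglyMeasurable_id, setIntegral_congr_fun (measurableSet_Ioc.diff hA) hQv,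
          setIntegral_const, measureReal_sdiff hAt hA measure_Ioc_lt_top.ne,
          Real.volume_real_Ioc_of_le ht.1.le, sub_zero, measureReal_def,
          volume_preimage_quantile_inter_Ioo ν measurableSet_Iio,
          smul_eq_mul, measureReal_def]

end ProbabilityTheory

theorem cvar_integral_eq_conditional_form_general
    {Ω : Type*} [MeasurableSpace Ω] (μ : Measure Ω) [IsProbabilityMeasure μ]
    (X : Ω → ℝ) (hXint : Integrable X μ)
    (t : ℝ) (ht : t ∈ Set.Ioo (0 : ℝ) 1)
    (v : ℝ) (hv : v = sInf {u : ℝ | t ≤ (μ {ω | X ω ≤ u}).toReal}) :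
    (∫ s in (0 : ℝ)..t, sInf {u : ℝ | s ≤ (μ {ω | X ω ≤ u}).toReal})
      = (∫ ω in {ω | X ω < v}, X ω ∂μ) + (t - (μ {ω | X ω < v}).toReal) * v := by
  have hX := hXint.aemeasurable
  have : IsProbabilityMeasure (μ.map X) := Measure.isProbabilityMeasure_map hX
  have hcdf (u : ℝ) : cdf (μ.map X) u = (μ {ω | X ω ≤ u}).toReal := by
    rw [cdf_eq_real, map_measureReal_apply_of_aemeasurable hX measurableSet_Iic]
    rfl
  have hquantile :
      quantile (μ.map X) = fun s => sInf {u : ℝ | s ≤ (μ {ω | X ω ≤ u}).toReal} := by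
    ext s
    simp only [quantile, hcdf]
  have hid : Integrable id (μ.map X) :=
    (integrable_map_measure aestronglyMeasurable_id hX).2 hXint
  rw [← hquantile, intervalIntegral_quantile_eq_setIntegral_Iio_add _ hid ht,
    congrFun hquantile t, ← hv,
    setIntegral_map measurableSet_Iio (f := fun x => x) aestronglyMeasurable_id hX,
    map_measureReal_apply_of_aemeasurable hX measurableSet_Iio]
  rfl

/-- Equivalence of the two definitions of conditional value-at-risk:
for a nonnegative integrable random variable `X`, `t ∈ (0,1)` and
`v = Quant_t(X) = inf {u | P(X ≤ u) ≥ t}`, we have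
`∫_0^t Quant_s(X) ds = E[X · 1_{X < v}] + (t − P(X < v)) · v`
(so that `CVaR_t(X) = (1/t) ∫_0^t Quant_s(X) ds
  = (1/t) (P(X < v) · E[X | X < v] + (t − P(X < v)) · v)`). -/
theorem cvar_integral_eq_conditional_form
    {Ω : Type*} [MeasurableSpace Ω] (μ : Measure Ω) [IsProbabilityMeasure μ]
    (X : Ω → ℝ) (hX : Measurable X) (hX0 : 0 ≤ᵐ[μ] X) (hXint : Integrable X μ)
    (t : ℝ) (ht : t ∈ Set.Ioo (0 : ℝ) 1)
    (v : ℝ) (hv : v = sInf {u : ℝ | t ≤ (μ {ω | X ω ≤ u}).toReal}) :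
    (∫ s in (0 : ℝ)..t, sInf {u : ℝ | s ≤ (μ {ω | X ω ≤ u}).toReal})
      = (∫ ω in {ω | X ω < v}, X ω ∂μ) + (t - (μ {ω | X ω < v}).toReal) * v :=
  cvar_integral_eq_conditional_form_general μ X hXint t ht v hv
end

section
/- CVaR band bound: let F, G : ℝ → [0,1] be nondecreasing with F(x) = G(x) = 0 for all x < 0 (nonnegative support), let t ∈ (0,1), Δ ≥ 0 with t + Δ ≤ 1 and sup_{x∈ℝ} |F(x) − G(x)| ≤ Δ, and suppose Quant_{t+Δ}(F) ≤ T for some T ≥ 0. Then |CVaR_t(F) − CVaR_t(G)| ≤ 2ΔT/t, where CVaR_t(H) = (1/t)∫_0^t Quant_s(H) ds. Consequently the width of the DKW-based confidence interval for CVaR tends to 0 as Δ → 0. -/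
open MeasureTheory

/-- The `t`-quantile of a nondecreasing function `F : ℝ → [0,1]`, as an extended real
(`inf ∅ = +∞`): `Quant_t(F) = inf {v : F v ≥ t}`. -/
noncomputable def quantileE (F : ℝ → ℝ) (t : ℝ) : EReal :=
  sInf ((fun v : ℝ => (v : EReal)) '' {v : ℝ | t ≤ F v})

/-- The conditional value-at-risk `CVaR_t(F) = (1/t) ∫_0^t Quant_s(F) ds` of a
nondecreasing function `F : ℝ → [0,1]`. -/
noncomputable def cvar (t : ℝ) (F : ℝ → ℝ) : ℝ :=
  (1 / t) * ∫ s in (0 : ℝ)..t, sInf {v : ℝ | s ≤ F v}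

/-- Auxiliary integral estimate: if `q` vanishes on the nonpositives, is monotone on
`Iic t`, is bounded by `T` there, and `q (s - Δ) ≤ r s` on `[0, t]`, then
`∫_0^t q - ∫_0^t r ≤ Δ * T`. -/
lemma cvar_aux (q r : ℝ → ℝ) (t Δ T : ℝ) (ht : 0 < t) (hΔ : 0 ≤ Δ)
    (hq0 : ∀ s ≤ (0:ℝ), q s = 0)
    (hqmono : MonotoneOn q (Set.Iic t))
    (hqT : ∀ s ≤ t, q s ≤ T)
    (hqr : ∀ s ∈ Set.Icc (0:ℝ) t, q (s - Δ) ≤ r s)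
    (hrint : IntervalIntegrable r volume 0 t) :
    (∫ s in (0:ℝ)..t, q s) - (∫ s in (0:ℝ)..t, r s) ≤ Δ * T := by
  have hint : ∀ a b : ℝ, a ≤ t → b ≤ t → IntervalIntegrable q volume a b := by
    intro a b ha hb
    refine (hqmono.mono ?_).intervalIntegrable
    intro x hx
    exact le_trans hx.2 (sup_le ha hb)
  have hintShift : IntervalIntegrable (fun s => q (s - Δ)) volume 0 t := by
    have h := (hint (-Δ) (t - Δ) (by linarith) (by linarith)).comp_sub_right Δ
    simpa using h
  have h1 : (∫ s in (0:ℝ)..t, q (s - Δ)) ≤ ∫ s in (0:ℝ)..t, r s :=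
    intervalIntegral.integral_mono_on ht.le hintShift hrint hqr
  have h2 : (∫ s in (0:ℝ)..t, q (s - Δ)) = ∫ s in (-Δ:ℝ)..(t - Δ), q s := by
    rw [intervalIntegral.integral_comp_sub_right]
    norm_num
  have h3 : (∫ s in (-Δ:ℝ)..(0:ℝ), q s) = 0 := by
    rw [intervalIntegral.integral_congr (g := fun _ => (0:ℝ))]
    · simp
    · intro s hs
      rw [Set.uIcc_of_le (by linarith)] at hs
      exact hq0 s hs.2
  have h4 : (∫ s in (-Δ:ℝ)..(t - Δ), q s)
      = (∫ s in (-Δ:ℝ)..(0:ℝ), q s) + ∫ s in (0:ℝ)..(t - Δ), q s :=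
    (intervalIntegral.integral_add_adjacent_intervals
      (hint _ _ (by linarith) (by linarith)) (hint _ _ (by linarith) (by linarith))).symm
  have h5 : (∫ s in (0:ℝ)..t, q s)
      = (∫ s in (0:ℝ)..(t - Δ), q s) + ∫ s in (t - Δ:ℝ)..t, q s :=
    (intervalIntegral.integral_add_adjacent_intervals
      (hint _ _ (by linarith) (by linarith)) (hint _ _ (by linarith) le_rfl)).symm
  have h6 : (∫ s in (t - Δ:ℝ)..t, q s) ≤ Δ * T := by
    have hle : (∫ s in (t - Δ:ℝ)..t, q s) ≤ ∫ _s in (t - Δ:ℝ)..t, T :=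
      intervalIntegral.integral_mono_on (by linarith)
        (hint _ _ (by linarith) le_rfl) intervalIntegrable_const
        (fun s hs => hqT s hs.2)
    have : (∫ _s in (t - Δ:ℝ)..t, T) = Δ * T := by
      rw [intervalIntegral.integral_const, smul_eq_mul]
      ring
    linarith
  linarith

/-- CVaR band bound: let `F, G : ℝ → [0,1]` be nondecreasing and equal
to `0` on the negatives, `t ∈ (0,1)`, `Δ ≥ 0` with `t + Δ ≤ 1` and
`sup_x |F x - G x| ≤ Δ`, and suppose `Quant_{t+Δ}(F) ≤ T` for some `T ≥ 0`. Then
`|CVaR_t(F) - CVaR_t(G)| ≤ 2ΔT/t`. -/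
theorem cvar_band_bound
    (F G : ℝ → ℝ) (hF : Monotone F) (hG : Monotone G)
    (hF01 : ∀ x, F x ∈ Set.Icc (0 : ℝ) 1) (hG01 : ∀ x, G x ∈ Set.Icc (0 : ℝ) 1)
    (hF0 : ∀ x < (0 : ℝ), F x = 0) (hG0 : ∀ x < (0 : ℝ), G x = 0)
    (t Δ : ℝ) (ht : t ∈ Set.Ioo (0 : ℝ) 1) (hΔ : 0 ≤ Δ) (htΔ : t + Δ ≤ 1)
    (hband : ∀ x : ℝ, |F x - G x| ≤ Δ)
    (T : ℝ) (hT0 : 0 ≤ T) (hquant : quantileE F (t + Δ) ≤ (T : EReal)) :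
    |cvar t F - cvar t G| ≤ 2 * Δ * T / t := by
  obtain ⟨ht0, ht1⟩ := ht
  set qF : ℝ → ℝ := fun s => sInf {v : ℝ | s ≤ F v} with hqFdef
  set qG : ℝ → ℝ := fun s => sInf {v : ℝ | s ≤ G v} with hqGdef
  -- F (T + ε) ≥ t + Δ for every ε > 0
  have hFT : ∀ ε : ℝ, 0 < ε → t + Δ ≤ F (T + ε) := by
    intro ε hε
    by_contra h
    push_neg at h
    have hlb : ((T + ε : ℝ) : EReal) ≤ quantileE F (t + Δ) := by
      apply le_sInf
      rintro x ⟨v, hv, rfl⟩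
      have hv' : t + Δ ≤ F v := hv
      have : T + ε < v := by
        by_contra hvle
        push_neg at hvle
        exact absurd (le_trans hv' (hF hvle)) (not_le.2 h)
      exact EReal.coe_le_coe_iff.2 this.le
    have h1 : ((T + ε : ℝ) : EReal) ≤ (T : EReal) := le_trans hlb hquant
    have h2 : T + ε ≤ T := by exact_mod_cast h1
    linarith
  have hGT : ∀ ε : ℝ, 0 < ε → t ≤ G (T + ε) := by
    intro ε hε
    have h1 := (abs_le.1 (hband (T + ε))).2
    have h2 := hFT ε hε
    linarith
  -- q_ = 0 for s ≤ 0, and nonnegativity of set elements for s > 0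
  have hzero : ∀ (H : ℝ → ℝ), (∀ x, H x ∈ Set.Icc (0:ℝ) 1) →
      ∀ s ≤ (0:ℝ), sInf {v : ℝ | s ≤ H v} = 0 := by
    intro H H01 s hs
    have huniv : {v : ℝ | s ≤ H v} = Set.univ := by
      ext v; simp [le_trans hs (H01 v).1]
    rw [huniv]
    exact Real.sInf_of_not_bddBelow (by simp [BddBelow, Set.Nonempty, lowerBounds]; intro x; exact ⟨x - 1, by linarith⟩)
  have hqF0 : ∀ s ≤ (0:ℝ), qF s = 0 := fun s hs => hzero F hF01 s hs
  have hqG0 : ∀ s ≤ (0:ℝ), qG s = 0 := fun s hs => hzero G hG01 s hs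
  have hpos : ∀ (H : ℝ → ℝ), (∀ x < (0:ℝ), H x = 0) →
      ∀ s : ℝ, 0 < s → ∀ v ∈ {v : ℝ | s ≤ H v}, (0:ℝ) ≤ v := by
    intro H H0 s hs v hv
    by_contra h
    push_neg at h
    have : s ≤ 0 := by rw [← H0 v h]; exact hv
    linarith
  have hqFnn : ∀ s : ℝ, 0 ≤ qF s := by
    intro s
    rcases le_or_gt s 0 with h | h
    · rw [hqF0 s h]
    · exact Real.sInf_nonneg (hpos F hF0 s h)
  have hqGnn : ∀ s : ℝ, 0 ≤ qG s := by
    intro s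
    rcases le_or_gt s 0 with h | h
    · rw [hqG0 s h]
    · exact Real.sInf_nonneg (hpos G hG0 s h)
  -- upper bounds by T
  have hqFle : ∀ s ≤ t + Δ, qF s ≤ T := by
    intro s hs
    rcases le_or_gt s 0 with h | h
    · rw [hqF0 s h]; exact hT0
    · by_contra hc
      push_neg at hc
      have hmem : T + (qF s - T) / 2 ∈ {v : ℝ | s ≤ F v} :=
        le_trans hs (hFT _ (by linarith))
      have := csInf_le ⟨0, hpos F hF0 s h⟩ hmem
      simp only [hqFdef] at this hc
      linarith
  have hqGle : ∀ s ≤ t, qG s ≤ T := by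
    intro s hs
    rcases le_or_gt s 0 with h | h
    · rw [hqG0 s h]; exact hT0
    · by_contra hc
      push_neg at hc
      have hmem : T + (qG s - T) / 2 ∈ {v : ℝ | s ≤ G v} :=
        le_trans hs (hGT _ (by linarith))
      have := csInf_le ⟨0, hpos G hG0 s h⟩ hmem
      simp only [hqGdef] at this hc
      linarith
  -- monotonicity on Iic
  have hqFmono : MonotoneOn qF (Set.Iic t) := by
    intro a ha b hb hab
    rcases le_or_gt b 0 with h | h
    · rw [hqF0 a (le_trans hab h), hqF0 b h]
    rcases le_or_gt a 0 with h' | h'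
    · rw [hqF0 a h']; exact hqFnn b
    · exact csInf_le_csInf ⟨0, hpos F hF0 a h'⟩
        ⟨T + 1, le_trans (le_trans hb (by linarith)) (hFT 1 one_pos)⟩
        (fun v hv => le_trans hab hv)
  have hqGmono : MonotoneOn qG (Set.Iic t) := by
    intro a ha b hb hab
    rcases le_or_gt b 0 with h | h
    · rw [hqG0 a (le_trans hab h), hqG0 b h]
    rcases le_or_gt a 0 with h' | h'
    · rw [hqG0 a h']; exact hqGnn b
    · exact csInf_le_csInf ⟨0, hpos G hG0 a h'⟩
        ⟨T + 1, le_trans hb (hGT 1 one_pos)⟩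
        (fun v hv => le_trans hab hv)
  -- band shift inequalities
  have hshiftFG : ∀ s ∈ Set.Icc (0:ℝ) t, qF (s - Δ) ≤ qG s := by
    intro s hs
    rcases le_or_gt (s - Δ) 0 with h | h
    · rw [hqF0 _ h]; exact hqGnn s
    · refine csInf_le_csInf ⟨0, hpos F hF0 _ h⟩
        ⟨T + 1, le_trans hs.2 (hGT 1 one_pos)⟩ ?_
      intro v hv
      have hb := (abs_le.1 (hband v)).1
      have hv' : s ≤ G v := hv
      show s - Δ ≤ F v
      linarith
  have hshiftGF : ∀ s ∈ Set.Icc (0:ℝ) t, qG (s - Δ) ≤ qF s := by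
    intro s hs
    rcases le_or_gt (s - Δ) 0 with h | h
    · rw [hqG0 _ h]; exact hqFnn s
    · refine csInf_le_csInf ⟨0, hpos G hG0 _ h⟩
        ⟨T + 1, le_trans (le_trans hs.2 (by linarith)) (hFT 1 one_pos)⟩ ?_
      intro v hv
      have hb := (abs_le.1 (hband v)).2
      have hv' : s ≤ F v := hv
      show s - Δ ≤ G v
      linarith
  -- integrability
  have hintF : IntervalIntegrable qF volume 0 t :=
    (hqFmono.mono (fun x hx => le_trans hx.2 (sup_le ht0.le le_rfl))).intervalIntegrable
  have hintG : IntervalIntegrable qG volume 0 t :=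
    (hqGmono.mono (fun x hx => le_trans hx.2 (sup_le ht0.le le_rfl))).intervalIntegrable
  -- the two one-sided bounds
  have hFGbound := cvar_aux qF qG t Δ T ht0 hΔ hqF0 hqFmono
    (fun s hs => hqFle s (by linarith)) hshiftFG hintG
  have hGFbound := cvar_aux qG qF t Δ T ht0 hΔ hqG0 hqGmono hqGle hshiftGF hintF
  have habs : |(∫ s in (0:ℝ)..t, qF s) - ∫ s in (0:ℝ)..t, qG s| ≤ Δ * T :=
    abs_sub_le_iff.2 ⟨hFGbound, hGFbound⟩
  have hcv : cvar t F - cvar t G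
      = (1 / t) * ((∫ s in (0:ℝ)..t, qF s) - ∫ s in (0:ℝ)..t, qG s) := by
    simp only [cvar, hqFdef, hqGdef]
    ring
  rw [hcv, abs_mul, abs_of_nonneg (by positivity : (0:ℝ) ≤ 1 / t)]
  have h1 : (1 / t) * |(∫ s in (0:ℝ)..t, qF s) - ∫ s in (0:ℝ)..t, qG s|
      ≤ (1 / t) * (Δ * T) :=
    mul_le_mul_of_nonneg_left habs (by positivity)
  have h2 : (1 / t) * (Δ * T) ≤ 2 * Δ * T / t := by
    rw [show 2 * Δ * T / t = (1 / t) * (2 * (Δ * T)) by ring]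
    have hΔT : 0 ≤ Δ * T := mul_nonneg hΔ hT0
    refine mul_le_mul_of_nonneg_left (by linarith) (by positivity)
  linarith
end

section
/- Entropic risk band bound: let X and Y be nonnegative real-valued random variables, γ > 0, and Δ ≥ 0 with Δ < E[e^{−γX}], such that F_X(x) − Δ ≤ F_Y(x) ≤ F_X(x) for all x ∈ ℝ. Then ERisk_γ(X) ≤ ERisk_γ(Y) ≤ ERisk_γ(X) − (1/γ) log(1 − Δ / E[e^{−γX}]). In particular, ERisk_γ(Y) − ERisk_γ(X) → 0 as Δ → 0. -/
/-!
By the layer-cake formula, a nonnegative `Z` satisfies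
`E[e^{-γZ}] = ∫₀¹ P(t ≤ e^{-γZ}) dt = ∫₀¹ F_Z(-log t / γ) dt`, because `e^{-γZ} ≤ 1`.
Integrating the band `F_X - Δ ≤ F_Y ≤ F_X` therefore gives
`E[e^{-γX}] - Δ ≤ E[e^{-γY}] ≤ E[e^{-γX}]`, and `-(1/γ) log` turns these into the two bounds,
using `log (E[e^{-γX}] - Δ) = log E[e^{-γX}] + log (1 - Δ / E[e^{-γX}])`.
-/

open MeasureTheory

/-- The entropic risk `ERisk_γ(Z) = -(1/γ) log E[e^{-γZ}]` of a random variable `Z`. -/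
noncomputable def entropicRisk {Ω : Type*} [MeasurableSpace Ω] (μ : Measure Ω)
    (γ : ℝ) (Z : Ω → ℝ) : ℝ :=
  -(1 / γ) * Real.log (∫ ω, Real.exp (-γ * Z ω) ∂μ)

theorem Real.exp_neg_mul_le_one {γ z : ℝ} (hγ : 0 ≤ γ) (hz : 0 ≤ z) : Real.exp (-γ * z) ≤ 1 :=
  Real.exp_le_one_iff.mpr (by nlinarith)

theorem Real.le_exp_neg_mul_iff {γ t z : ℝ} (hγ : 0 < γ) (ht : 0 < t) :
    t ≤ Real.exp (-γ * z) ↔ z ≤ -Real.log t / γ := by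
  rw [← Real.log_le_iff_le_exp ht, le_div_iff₀ hγ]
  constructor <;> intro <;> linarith

section

variable {α : Type*} [MeasurableSpace α] {μ : Measure α}

theorem lintegral_ofReal_eq_setLIntegral_Ioc_meas_le {f : α → ℝ} (hf : AEMeasurable f μ)
    (hf0 : 0 ≤ᵐ[μ] f) (hf1 : f ≤ᵐ[μ] 1) :
    ∫⁻ a, ENNReal.ofReal (f a) ∂μ = ∫⁻ t in Set.Ioc 0 1, μ {a | t ≤ f a} := by
  have htail : ∫⁻ t in Set.Ioi (1 : ℝ), μ {a | t ≤ f a} = 0 := by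
    rw [setLIntegral_congr_fun (g := fun _ => 0) measurableSet_Ioi fun t ht => ?_, lintegral_zero]
    exact measure_mono_null (fun a ha => not_le.mpr (lt_of_lt_of_le ht ha)) (ae_iff.mp hf1)
  rw [lintegral_eq_lintegral_meas_le μ hf0 hf, ← Set.Ioc_union_Ioi_eq_Ioi zero_le_one,
    lintegral_union measurableSet_Ioi (Set.Ioc_disjoint_Ioi le_rfl), htail, add_zero]

theorem integral_le_integral_add_of_meas_le_le_add {f g : α → ℝ} {δ : ℝ}
    (hf : AEMeasurable f μ) (hf0 : 0 ≤ᵐ[μ] f) (hf1 : f ≤ᵐ[μ] 1)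
    (hg : Integrable g μ) (hg0 : 0 ≤ᵐ[μ] g) (hδ : 0 ≤ δ)
    (h : ∀ t ∈ Set.Ioc (0 : ℝ) 1, μ {a | t ≤ f a} ≤ μ {a | t ≤ g a} + ENNReal.ofReal δ) :
    ∫ a, f a ∂μ ≤ ∫ a, g a ∂μ + δ := by
  have hlintegral : ∫⁻ a, ENNReal.ofReal (f a) ∂μ
      ≤ ∫⁻ a, ENNReal.ofReal (g a) ∂μ + ENNReal.ofReal δ :=
    calc ∫⁻ a, ENNReal.ofReal (f a) ∂μ = ∫⁻ t in Set.Ioc 0 1, μ {a | t ≤ f a} :=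
          lintegral_ofReal_eq_setLIntegral_Ioc_meas_le hf hf0 hf1
      _ ≤ ∫⁻ t in Set.Ioc 0 1, (μ {a | t ≤ g a} + ENNReal.ofReal δ) :=
          setLIntegral_mono' measurableSet_Ioc h
      _ = (∫⁻ t in Set.Ioc 0 1, μ {a | t ≤ g a}) + ENNReal.ofReal δ := by
          rw [lintegral_add_right _ measurable_const, setLIntegral_const, Real.volume_Ioc]
          norm_num
      _ ≤ (∫⁻ t in Set.Ioi 0, μ {a | t ≤ g a}) + ENNReal.ofReal δ :=
          add_le_add_left (lintegral_mono_set Set.Ioc_subset_Ioi_self) _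
      _ = ∫⁻ a, ENNReal.ofReal (g a) ∂μ + ENNReal.ofReal δ := by
          rw [lintegral_eq_lintegral_meas_le μ hg0 hg.aemeasurable]
  rw [integral_eq_lintegral_of_nonneg_ae hf0 hf.aestronglyMeasurable,
    integral_eq_lintegral_of_nonneg_ae hg0 hg.aestronglyMeasurable]
  simpa [hδ] using ENNReal.toReal_le_add hlintegral hg.lintegral_lt_top.ne ENNReal.ofReal_ne_top

theorem integral_exp_neg_mul_le_add_of_cdf_le_add [IsFiniteMeasure μ] {X Y : α → ℝ} {γ δ : ℝ}
    (hX : AEMeasurable X μ) (hY : AEMeasurable Y μ) (hX0 : 0 ≤ᵐ[μ] X) (hY0 : 0 ≤ᵐ[μ] Y)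
    (hγ : 0 < γ) (hδ : 0 ≤ δ) (hcdf : ∀ x, μ.real {a | X a ≤ x} ≤ μ.real {a | Y a ≤ x} + δ) :
    ∫ a, Real.exp (-γ * X a) ∂μ ≤ ∫ a, Real.exp (-γ * Y a) ∂μ + δ := by
  have hexp_nonneg (Z : α → ℝ) : 0 ≤ᵐ[μ] fun a => Real.exp (-γ * Z a) :=
    ae_of_all _ fun a => (Real.exp_pos _).le
  have hexp_le_one {Z : α → ℝ} (hZ0 : 0 ≤ᵐ[μ] Z) : (fun a => Real.exp (-γ * Z a)) ≤ᵐ[μ] 1 :=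
    hZ0.mono fun a ha => Real.exp_neg_mul_le_one hγ.le ha
  have hY_integrable : Integrable (fun a => Real.exp (-γ * Y a)) μ := by
    refine Integrable.of_bound (by fun_prop) 1 ((hexp_le_one hY0).mono fun a ha => ?_)
    rwa [Real.norm_of_nonneg (Real.exp_pos _).le]
  refine integral_le_integral_add_of_meas_le_le_add (by fun_prop) (hexp_nonneg X)
    (hexp_le_one hX0) hY_integrable (hexp_nonneg Y) hδ fun t ht => ?_
  simp only [Real.le_exp_neg_mul_iff hγ ht.1]
  calc μ {a | X a ≤ -Real.log t / γ}
      = ENNReal.ofReal (μ.real {a | X a ≤ -Real.log t / γ}) := by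
        rw [ofReal_measureReal]
    _ ≤ ENNReal.ofReal (μ.real {a | Y a ≤ -Real.log t / γ} + δ) := ENNReal.ofReal_le_ofReal (hcdf _)
    _ = μ {a | Y a ≤ -Real.log t / γ} + ENNReal.ofReal δ := by
      rw [ENNReal.ofReal_add measureReal_nonneg hδ, ofReal_measureReal]

theorem entropicRisk_le_of_integral_exp_le {γ : ℝ} {X Y : α → ℝ} (hγ : 0 < γ)
    (hY : 0 < ∫ a, Real.exp (-γ * Y a) ∂μ)
    (hYX : ∫ a, Real.exp (-γ * Y a) ∂μ ≤ ∫ a, Real.exp (-γ * X a) ∂μ) :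
    entropicRisk μ γ X ≤ entropicRisk μ γ Y :=
  mul_le_mul_of_nonpos_left (Real.log_le_log hY hYX) (by simp [hγ.le])

theorem entropicRisk_le_sub_of_integral_exp_sub_le {γ Δ : ℝ} {X Y : α → ℝ} (hγ : 0 < γ)
    (hΔ : 0 ≤ Δ) (hΔlt : Δ < ∫ a, Real.exp (-γ * X a) ∂μ)
    (hXY : ∫ a, Real.exp (-γ * X a) ∂μ - Δ ≤ ∫ a, Real.exp (-γ * Y a) ∂μ) :
    entropicRisk μ γ Y
      ≤ entropicRisk μ γ X - (1 / γ) * Real.log (1 - Δ / ∫ a, Real.exp (-γ * X a) ∂μ) := by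
  set EX := ∫ a, Real.exp (-γ * X a) ∂μ
  have hEX : 0 < EX := hΔ.trans_lt hΔlt
  have hlog : Real.log (EX - Δ) = Real.log EX + Real.log (1 - Δ / EX) := by
    rw [← Real.log_mul hEX.ne' (sub_pos.mpr ((div_lt_one hEX).mpr hΔlt)).ne', mul_one_sub,
      mul_div_cancel₀ _ hEX.ne']
  calc entropicRisk μ γ Y ≤ -(1 / γ) * Real.log (EX - Δ) :=
        mul_le_mul_of_nonpos_left (Real.log_le_log (sub_pos.mpr hΔlt) hXY) (by simp [hγ.le])
    _ = entropicRisk μ γ X - (1 / γ) * Real.log (1 - Δ / EX) := by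
        rw [hlog, entropicRisk]
        ring

end

/-- Entropic risk band bound: let `X` and `Y` be nonnegative random
variables, `γ > 0`, and `Δ ≥ 0` with `Δ < E[e^{-γX}]`, such that
`F_X x - Δ ≤ F_Y x ≤ F_X x` for all `x`. Then
`ERisk_γ(X) ≤ ERisk_γ(Y) ≤ ERisk_γ(X) - (1/γ) log (1 - Δ / E[e^{-γX}])`. -/
theorem entropicRisk_band_bound
    {Ω : Type*} [MeasurableSpace Ω] (μ : Measure Ω) [IsProbabilityMeasure μ]
    (X Y : Ω → ℝ) (hX : Measurable X) (hY : Measurable Y)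
    (hX0 : 0 ≤ᵐ[μ] X) (hY0 : 0 ≤ᵐ[μ] Y)
    (γ : ℝ) (hγ : 0 < γ) (Δ : ℝ) (hΔ : 0 ≤ Δ)
    (hΔlt : Δ < ∫ ω, Real.exp (-γ * X ω) ∂μ)
    (hband : ∀ x : ℝ,
      (μ {ω | X ω ≤ x}).toReal - Δ ≤ (μ {ω | Y ω ≤ x}).toReal
        ∧ (μ {ω | Y ω ≤ x}).toReal ≤ (μ {ω | X ω ≤ x}).toReal) :
    entropicRisk μ γ X ≤ entropicRisk μ γ Y
      ∧ entropicRisk μ γ Y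
          ≤ entropicRisk μ γ X
            - (1 / γ) * Real.log (1 - Δ / ∫ ω, Real.exp (-γ * X ω) ∂μ) := by
  have hYX := integral_exp_neg_mul_le_add_of_cdf_le_add hY.aemeasurable hX.aemeasurable hY0 hX0
    hγ le_rfl fun x => by simpa [measureReal_def] using (hband x).2
  have hXY := integral_exp_neg_mul_le_add_of_cdf_le_add hX.aemeasurable hY.aemeasurable hX0 hY0
    hγ hΔ fun x => by simpa [measureReal_def, sub_le_iff_le_add] using (hband x).1
  exact ⟨entropicRisk_le_of_integral_exp_le hγ (by linarith) (by linarith),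
    entropicRisk_le_sub_of_integral_exp_sub_le hγ hΔ hΔlt (by linarith)⟩
end
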